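/- arXiv:1409.7099 — 2 statements merged into one kernel-verified Lean document; each statement's English description precedes it below -/
import Mathlib

section
/- (Hardy–Littlewood inequality) For nonnegative measurable functions u, v on ℝⁿ vanishing at infinity, ∫_{ℝⁿ} u(x)v(x) dx ≤ ∫_{ℝⁿ} u*(x) v*(x) dx, where u*, v* denote the spherically symmetric decreasing rearrangements of u and v. -/
/-!
By the layer-cake formula, applied once to each factor, `∫ u v` is the double integral over
`s, t > 0` of `|{u > s} ∩ {v > t}|`. That measure is at most `min |{u > s}| |{v > t}|`, and for the
rearrangements this bound is attained: up to the origin, `{u* > s}` and `{v* > t}` are the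
concentric open balls of volumes `|{u > s}|` and `|{v > t}|`, so their intersection is the smaller
of the two.
-/

open MeasureTheory Metric Real

/-- The symmetric decreasing rearrangement of `u : ℝⁿ → ℝ`: the radial decreasing
function whose superlevel sets are balls centered at the origin with the same
measure as the corresponding superlevel sets of `u`. -/
noncomputable def symmetricRearrangement (n : ℕ) (u : EuclideanSpace ℝ (Fin n) → ℝ)
    (x : EuclideanSpace ℝ (Fin n)) : ℝ :=
  sInf {t : ℝ | 0 ≤ t ∧
    volume {y : EuclideanSpace ℝ (Fin n) | t < u y} ≤
      volume (ball (0 : EuclideanSpace ℝ (Fin n)) ‖x‖)}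

open Set Filter Topology
open scoped ENNReal

section SuperlevelSets

variable {α : Type*} [MeasurableSpace α] {μ : Measure α}

lemma lintegral_ofReal_mul_eq_lintegral_measure_inter {f g : α → ℝ} (hf : Measurable f)
    (hg : Measurable g) (hf0 : ∀ x, 0 ≤ f x) (hg0 : ∀ x, 0 ≤ g x) :
    ∫⁻ x, ENNReal.ofReal (f x * g x) ∂μ =
      ∫⁻ s in Ioi 0, ∫⁻ t in Ioi 0, μ ({x | s < f x} ∩ {x | t < g x}) := by
  have hdensity : ∫⁻ x, ENNReal.ofReal (f x * g x) ∂μ =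
      ∫⁻ x, ENNReal.ofReal (f x) ∂μ.withDensity fun x => ENNReal.ofReal (g x) := by
    rw [lintegral_withDensity_eq_lintegral_mul _ hg.ennreal_ofReal hf.ennreal_ofReal]
    simp only [Pi.mul_apply, ← ENNReal.ofReal_mul (hg0 _), mul_comm]
  rw [hdensity, lintegral_eq_lintegral_meas_lt _ (.of_forall hf0) hf.aemeasurable]
  refine setLIntegral_congr_fun measurableSet_Ioi fun s _ => ?_
  have hfs : MeasurableSet {x | s < f x} := measurableSet_lt measurable_const hf
  rw [withDensity_apply _ hfs, lintegral_eq_lintegral_meas_lt _ (.of_forall hg0) hg.aemeasurable]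
  refine setLIntegral_congr_fun measurableSet_Ioi fun t _ => ?_
  rw [Measure.restrict_apply' hfs, inter_comm]

variable {u : α → ℝ} {s : ℝ} {V : ℝ≥0∞}

lemma measure_setOf_lt_le_of_forall_lt (h : ∀ r, s < r → μ {y | r < u y} ≤ V) :
    μ {y | s < u y} ≤ V := by
  have hunion : {y | s < u y} = ⋃ k : ℕ, {y | s + 1 / ((k : ℝ) + 1) < u y} := by
    ext y
    simp only [mem_ofPred_eq, mem_iUnion]
    refine ⟨fun hy => ?_, fun ⟨k, hk⟩ => (le_add_of_nonneg_right (by positivity)).trans_lt hk⟩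
    obtain ⟨k, hk⟩ := exists_nat_one_div_lt (sub_pos.2 hy)
    exact ⟨k, by linarith⟩
  have hmono : Monotone fun k : ℕ => {y | s + 1 / ((k : ℝ) + 1) < u y} := by
    intro k l hkl y (hy : s + 1 / ((k : ℝ) + 1) < u y)
    have : s + 1 / ((l : ℝ) + 1) ≤ s + 1 / ((k : ℝ) + 1) := by gcongr
    exact this.trans_lt hy
  rw [hunion, hmono.measure_iUnion]
  exact iSup_le fun k => h _ (lt_add_of_pos_right s (by positivity))

lemma tendsto_measure_setOf_lt_atTop (hu : Measurable u) (hfin : ∃ t, μ {y | t < u y} ≠ ∞) :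
    Tendsto (fun t => μ {y | t < u y}) atTop (𝓝 0) := by
  have hempty : ⋂ t : ℝ, {y | t < u y} = ∅ :=
    eq_empty_of_forall_notMem fun y hy => lt_irrefl (u y) (mem_iInter.1 hy (u y))
  have h := tendsto_measure_iInter_atTop (μ := μ) (s := fun t : ℝ => {y | t < u y})
    (fun t => (measurableSet_lt measurable_const hu).nullMeasurableSet)
    (fun t r htr y (hy : r < u y) => lt_of_le_of_lt htr hy) hfin
  rwa [hempty, measure_empty] at h

noncomputable def decreasingRearrangement (μ : Measure α) (u : α → ℝ) (V : ℝ≥0∞) : ℝ :=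
  sInf {t : ℝ | 0 ≤ t ∧ μ {y | t < u y} ≤ V}

lemma decreasingRearrangement_nonneg : 0 ≤ decreasingRearrangement μ u V :=
  Real.sInf_nonneg fun _ ht => ht.1

lemma decreasingRearrangement_le (hs : 0 ≤ s) (h : μ {y | s < u y} ≤ V) :
    decreasingRearrangement μ u V ≤ s :=
  csInf_le ⟨0, fun _ ht => ht.1⟩ ⟨hs, h⟩

lemma lt_decreasingRearrangement_iff (hu : Measurable u) (hfin : ∃ t, μ {y | t < u y} ≠ ∞)
    (hV : V ≠ 0) (hs : 0 ≤ s) : s < decreasingRearrangement μ u V ↔ V < μ {y | s < u y} := by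
  refine ⟨fun h => not_le.1 fun hle => (decreasingRearrangement_le hs hle).not_gt h,
    fun h => not_le.1 fun hle => h.not_ge ?_⟩
  have hne : {t : ℝ | 0 ≤ t ∧ μ {y | t < u y} ≤ V}.Nonempty := by
    obtain ⟨t, ht, ht0⟩ := (((tendsto_measure_setOf_lt_atTop hu hfin).eventually_lt_const
      (pos_iff_ne_zero.2 hV)).and (eventually_ge_atTop 0)).exists
    exact ⟨t, ht0, ht.le⟩
  refine measure_setOf_lt_le_of_forall_lt fun r hr => ?_
  obtain ⟨t, ⟨-, htV⟩, htr⟩ := exists_lt_of_csInf_lt hne (hle.trans_lt hr)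
  exact (measure_mono fun y (hy : r < u y) => htr.trans hy).trans htV

end SuperlevelSets

section BallVolume

variable {E : Type*} [NormedAddCommGroup E] [NormedSpace ℝ E] [MeasurableSpace E] [BorelSpace E]
  [FiniteDimensional ℝ E] [Nontrivial E] (μ : Measure E) [μ.IsAddHaarMeasure]

lemma exists_addHaar_ball_eq {m : ℝ≥0∞} (hm : m ≠ ∞) :
    ∃ r, 0 ≤ r ∧ μ (ball (0 : E) r) = m := by
  have hc0 : μ (ball (0 : E) 1) ≠ 0 := (measure_ball_pos μ 0 one_pos).ne'
  have hc : μ (ball (0 : E) 1) ≠ ∞ := measure_ball_lt_top.ne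
  have hd : Module.finrank ℝ E ≠ 0 := Module.finrank_pos.ne'
  refine ⟨(m / μ (ball 0 1)).toReal ^ (Module.finrank ℝ E : ℝ)⁻¹, by positivity, ?_⟩
  rw [Measure.addHaar_ball μ 0 (by positivity),
    Real.rpow_inv_natCast_pow ENNReal.toReal_nonneg hd,
    ENNReal.ofReal_toReal (ENNReal.div_ne_top hm hc0), ENNReal.div_mul_cancel hc0 hc]

lemma setOf_addHaar_ball_norm_lt (r : ℝ) :
    {x : E | μ (ball 0 ‖x‖) < μ (ball 0 r)} = ball 0 r := by
  ext x
  rw [mem_ofPred_eq, mem_ball_zero_iff]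
  refine ⟨fun h => not_le.1 fun hle => h.not_ge (measure_mono (ball_subset_ball hle)),
    fun h => ?_⟩
  rw [Measure.addHaar_ball μ 0 (norm_nonneg x),
    Measure.addHaar_ball μ 0 ((norm_nonneg x).trans h.le),
    ENNReal.mul_lt_mul_iff_left (measure_ball_pos μ 0 one_pos).ne' measure_ball_lt_top.ne,
    ENNReal.ofReal_lt_ofReal_iff (pow_pos ((norm_nonneg x).trans_lt h) _)]
  exact pow_lt_pow_left₀ h (norm_nonneg x) Module.finrank_pos.ne'

end BallVolume

section SymmetricRearrangement

variable {n : ℕ} {u v : EuclideanSpace ℝ (Fin n) → ℝ}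

lemma symmetricRearrangement_eq_decreasingRearrangement (x : EuclideanSpace ℝ (Fin n)) :
    symmetricRearrangement n u x =
      decreasingRearrangement volume u (volume (ball (0 : EuclideanSpace ℝ (Fin n)) ‖x‖)) :=
  rfl

lemma measurable_symmetricRearrangement (hu : Measurable u)
    (hfin : ∃ t, volume {y | t < u y} ≠ ∞) : Measurable (symmetricRearrangement n u) := by
  refine measurable_of_Ioi fun a => ?_
  rcases lt_or_ge a 0 with ha | ha
  · convert MeasurableSet.univ
    exact eq_univ_of_forall fun x => ha.trans_le decreasingRearrangement_nonneg
  have hball : Measurable fun x : EuclideanSpace ℝ (Fin n) =>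
      volume (ball (0 : EuclideanSpace ℝ (Fin n)) ‖x‖) :=
    (Monotone.measurable fun r s h => measure_mono (ball_subset_ball h)).comp measurable_norm
  have hpre : symmetricRearrangement n u ⁻¹' Ioi a =
      (symmetricRearrangement n u ⁻¹' Ioi a ∩ {0}) ∪
      ({x | volume (ball (0 : EuclideanSpace ℝ (Fin n)) ‖x‖) < volume {y | a < u y}} \ {0}) := by
    ext x
    rcases eq_or_ne x 0 with rfl | hx
    · simp
    · have hV := (measure_ball_pos volume (0 : EuclideanSpace ℝ (Fin n)) (norm_pos_iff.2 hx)).ne'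
      simp [hx, symmetricRearrangement_eq_decreasingRearrangement,
        lt_decreasingRearrangement_iff hu hfin hV ha]
  rw [hpre]
  exact (subsingleton_singleton.anti inter_subset_right).measurableSet.union
    ((measurableSet_lt hball measurable_const).diff (measurableSet_singleton 0))

lemma measure_inter_setOf_lt_le_symmetricRearrangement [NeZero n] (hu : Measurable u)
    (hv : Measurable v) {s t : ℝ} (hs : 0 ≤ s) (ht : 0 ≤ t) (hus : volume {y | s < u y} ≠ ∞)
    (hvt : volume {y | t < v y} ≠ ∞) :
    volume ({x | s < u x} ∩ {x | t < v x}) ≤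
      volume ({x | s < symmetricRearrangement n u x} ∩ {x | t < symmetricRearrangement n v x}) := by
  obtain ⟨r, -, hr⟩ := exists_addHaar_ball_eq (volume : Measure (EuclideanSpace ℝ (Fin n)))
    (min_lt_of_left_lt hus.lt_top).ne
  calc volume ({x | s < u x} ∩ {x | t < v x})
      ≤ min (volume {y | s < u y}) (volume {y | t < v y}) :=
        le_min (measure_mono inter_subset_left) (measure_mono inter_subset_right)
    _ = volume (ball (0 : EuclideanSpace ℝ (Fin n)) r \ {0}) := by
      rw [measure_sdiff_null (measure_singleton 0), hr]
    _ ≤ _ := measure_mono ?_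
  rintro x ⟨hxr, hx⟩
  rw [← setOf_addHaar_ball_norm_lt volume r, hr, mem_ofPred_eq, lt_min_iff] at hxr
  have hV := (measure_ball_pos volume (0 : EuclideanSpace ℝ (Fin n)) (norm_pos_iff.2 hx)).ne'
  exact ⟨(lt_decreasingRearrangement_iff hu ⟨s, hus⟩ hV hs).2 hxr.1,
    (lt_decreasingRearrangement_iff hv ⟨t, hvt⟩ hV ht).2 hxr.2⟩

lemma symmetricRearrangement_zero {u : EuclideanSpace ℝ (Fin 0) → ℝ} (hu0 : ∀ x, 0 ≤ u x)
    (x : EuclideanSpace ℝ (Fin 0)) : symmetricRearrangement 0 u x = u x := by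
  have hball : ball (0 : EuclideanSpace ℝ (Fin 0)) ‖x‖ = ∅ := by
    rw [Subsingleton.elim x 0, norm_zero, ball_zero]
  have hlevel (t : ℝ) : {y | t < u y} = if t < u x then univ else ∅ := by
    split_ifs with h
    · exact eq_univ_of_forall fun y => by rwa [Subsingleton.elim y x]
    · exact eq_empty_of_forall_notMem fun y hy => h (by rwa [Subsingleton.elim y x] at hy)
  refine le_antisymm (decreasingRearrangement_le (hu0 x) (by simp [hlevel])) ?_
  refine le_csInf ⟨u x, hu0 x, by simp [hlevel]⟩ fun t ⟨_, ht⟩ => not_lt.1 fun htx => ?_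
  rw [hlevel, if_pos htx, hball, measure_empty, nonpos_iff_eq_zero,
    Measure.measure_univ_eq_zero] at ht
  exact NeZero.ne _ ht

end SymmetricRearrangement

/-- Hardy–Littlewood inequality: for nonnegative measurable `u, v` on `ℝⁿ`
vanishing at infinity, `∫ u v ≤ ∫ u* v*`. -/
theorem hardy_littlewood_rearrangement
    (n : ℕ) (u v : EuclideanSpace ℝ (Fin n) → ℝ)
    (hu : Measurable u) (hv : Measurable v)
    (hu0 : ∀ x, 0 ≤ u x) (hv0 : ∀ x, 0 ≤ v x)
    (huvan : ∀ t : ℝ, 0 < t → volume {y : EuclideanSpace ℝ (Fin n) | t < u y} < ⊤)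
    (hvvan : ∀ t : ℝ, 0 < t → volume {y : EuclideanSpace ℝ (Fin n) | t < v y} < ⊤) :
    ∫⁻ x, ENNReal.ofReal (u x * v x) ≤
      ∫⁻ x, ENNReal.ofReal (symmetricRearrangement n u x * symmetricRearrangement n v x) := by
  obtain rfl | hn := eq_or_ne n 0
  · simp only [symmetricRearrangement_zero hu0, symmetricRearrangement_zero hv0, le_refl]
  have : NeZero n := ⟨hn⟩
  rw [lintegral_ofReal_mul_eq_lintegral_measure_inter hu hv hu0 hv0,
    lintegral_ofReal_mul_eq_lintegral_measure_inter
      (measurable_symmetricRearrangement hu ⟨1, (huvan 1 one_pos).ne⟩)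
      (measurable_symmetricRearrangement hv ⟨1, (hvvan 1 one_pos).ne⟩)
      (fun _ => decreasingRearrangement_nonneg) (fun _ => decreasingRearrangement_nonneg)]
  refine setLIntegral_mono' measurableSet_Ioi fun s hs =>
    setLIntegral_mono' measurableSet_Ioi fun t ht => ?_
  exact measure_inter_setOf_lt_le_symmetricRearrangement hu hv (le_of_lt hs) (le_of_lt ht)
    (huvan s hs).ne (hvvan t ht).ne
end

section
/- (Bathtub principle on a sigma-finite measure space, characteristic-function maximizer) Let (X, Σ, μ) be a sigma-finite measure space, f : X → ℝ a measurable function, G > 0 a constant, and suppose there exists s ∈ ℝ with μ({x : f(x) ≥ s}) = G. Then for every measurable g : X → [0,1] with ∫_X g dμ = G, one has ∫_X f·g dμ ≤ ∫_{\{f ≥ s\}} f dμ. -/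
/-!
Write `E = {s ≤ f}`. Pointwise, `f g - 𝟙_E f ≤ s (g - 𝟙_E)` whenever `0 ≤ g ≤ 1`: on `E` both
`f - s ≥ 0` and `g - 1 ≤ 0`, off `E` both `f - s < 0` and `g ≥ 0`. Integrating gives
`∫ f g - ∫_E f ≤ s (∫ g - μ E)`, and the right-hand side vanishes when `∫ g = μ E`.
-/

open MeasureTheory

theorem mul_sub_ite_le_mul_sub_ite {a b s : ℝ} (hb0 : 0 ≤ b) (hb1 : b ≤ 1) :
    a * b - (if s ≤ a then a else 0) ≤ s * (b - if s ≤ a then 1 else 0) := by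
  split_ifs with h
  · nlinarith
  · nlinarith

theorem integral_mul_sub_setIntegral_superlevel_le {X : Type*} [MeasurableSpace X]
    {μ : Measure X} {f g : X → ℝ} {s : ℝ} (hf : Measurable f)
    (hμE : μ {x | s ≤ f x} ≠ ⊤) (hfE : IntegrableOn f {x | s ≤ f x} μ)
    (hg : Integrable g μ) (hg0 : ∀ x, 0 ≤ g x) (hg1 : ∀ x, g x ≤ 1)
    (hfg : Integrable (fun x => f x * g x) μ) :
    ∫ x, f x * g x ∂μ - ∫ x in {x | s ≤ f x}, f x ∂μ
      ≤ s * (∫ x, g x ∂μ - μ.real {x | s ≤ f x}) := by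
  set E : Set X := {x | s ≤ f x}
  have hE : MeasurableSet E := measurableSet_le measurable_const hf
  have hχ : Integrable (E.indicator 1) μ := (integrableOn_const (C := (1 : ℝ)) hμE).integrable_indicator hE
  calc ∫ x, f x * g x ∂μ - ∫ x in E, f x ∂μ
      = ∫ x, (f x * g x - E.indicator f x) ∂μ := by
        rw [← integral_indicator hE, integral_sub hfg (hfE.integrable_indicator hE)]
    _ ≤ ∫ x, s * (g x - E.indicator 1 x) ∂μ :=
        integral_mono (hfg.sub (hfE.integrable_indicator hE)) ((hg.sub hχ).const_mul s)
          fun x => by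
            simpa only [Set.indicator_apply, Set.mem_ofPred_eq, Pi.one_apply, E]
              using mul_sub_ite_le_mul_sub_ite (hg0 x) (hg1 x)
    _ = s * (∫ x, g x ∂μ - μ.real E) := by
        rw [integral_const_mul, integral_sub hg hχ, integral_indicator_one hE]

theorem bathtub_principle_general
    {X : Type*} [MeasurableSpace X] (μ : Measure X)
    (f : X → ℝ) (hf : Measurable f)
    (hfloc : ∀ E : Set X, MeasurableSet E → μ E < ⊤ → IntegrableOn f E μ)
    (G : ℝ) (hG : 0 < G) (s : ℝ)
    (hs : μ {x | s ≤ f x} = ENNReal.ofReal G)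
    (g : X → ℝ)
    (hg0 : ∀ x, 0 ≤ g x) (hg1 : ∀ x, g x ≤ 1)
    (hgint : Integrable g μ) (hgG : ∫ x, g x ∂μ = G)
    (hfg : Integrable (fun x => f x * g x) μ) :
    ∫ x, f x * g x ∂μ ≤ ∫ x in {x | s ≤ f x}, f x ∂μ := by
  have hμE : μ {x | s ≤ f x} < ⊤ := hs ▸ ENNReal.ofReal_lt_top
  have key := integral_mul_sub_setIntegral_superlevel_le hf hμE.ne
    (hfloc _ (measurableSet_le measurable_const hf) hμE) hgint hg0 hg1 hfg
  rw [hgG, measureReal_def, hs, ENNReal.toReal_ofReal hG.le, sub_self, mul_zero] at key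
  linarith

/-- Bathtub principle on a sigma-finite measure space (characteristic-function
maximizer): if `μ{f ≥ s} = G`, then for every measurable `g : X → [0,1]`
with `∫ g dμ = G`, one has `∫ f g dμ ≤ ∫_{f ≥ s} f dμ`. -/
theorem bathtub_principle
    {X : Type*} [MeasurableSpace X] (μ : Measure X) [SigmaFinite μ]
    (f : X → ℝ) (hf : Measurable f)
    (hfloc : ∀ E : Set X, MeasurableSet E → μ E < ⊤ → IntegrableOn f E μ)
    (G : ℝ) (hG : 0 < G) (s : ℝ)
    (hs : μ {x | s ≤ f x} = ENNReal.ofReal G)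
    (g : X → ℝ) (hg : Measurable g)
    (hg0 : ∀ x, 0 ≤ g x) (hg1 : ∀ x, g x ≤ 1)
    (hgint : Integrable g μ) (hgG : ∫ x, g x ∂μ = G)
    (hfg : Integrable (fun x => f x * g x) μ) :
    ∫ x, f x * g x ∂μ ≤ ∫ x in {x | s ≤ f x}, f x ∂μ :=
  bathtub_principle_general μ f hf hfloc G hG s hs g hg0 hg1 hgint hgG hfg
end
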